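/- Let B be the blueprint with underlying monoid F_1[T_1,T_2,T_3,T_4] subject to the congruence T_1T_4 ≡ T_2T_3 + 1 in ℕ[T_1,...,T_4]. Then a prime ideal of B cannot contain both one of {T_1, T_4} and one of {T_2, T_3}; consequently the prime k-ideals of B are exactly {0}, (T_1), (T_2), (T_3), (T_4), (T_1,T_4), and (T_2,T_3). -/

import Mathlib

open MvPolynomial
open scoped Classical

/-- The free commutative monoid with zero on the four generators `T_1, ..., T_4`. -/
abbrev SL2Monoid : Type := WithZero (Multiplicative (Fin 4 →₀ ℕ))

/-- The generator `T i` (for `i = 0,...,3`, representing `T_1,...,T_4`). -/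
noncomputable def Tgen (i : Fin 4) : SL2Monoid :=
  (Multiplicative.ofAdd (Finsupp.single i 1) : Multiplicative (Fin 4 →₀ ℕ))

/-- The congruence on `ℕ[T_1,...,T_4]` generated by `T_1 T_4 ≡ T_2 T_3 + 1`. -/
noncomputable def sl2Con : RingCon (MvPolynomial (Fin 4) ℕ) :=
  ringConGen (fun p q => p = X 0 * X 3 ∧ q = X 1 * X 2 + 1)

/-- The quotient semiring `ℕ[T_1,...,T_4]/⟨T_1T_4 ≡ T_2T_3 + 1⟩`, the ambient semiring
of the blueprint `B` of `SL(2)` over `F_1`. -/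
abbrev SL2Semiring : Type := sl2Con.Quotient

/-- The canonical map from the monoid of monomials (with zero) to the quotient
semiring, sending `0` to `0` and a monomial to its class. -/
noncomputable def toSL2Semiring (a : SL2Monoid) : SL2Semiring :=
  if h : a = 0 then 0
  else (↑(∏ i : Fin 4, (X i : MvPolynomial (Fin 4) ℕ) ^ ((WithZero.unzero h).toAdd i)) :
    sl2Con.Quotient)

/-- A `k`-ideal of the blueprint `B`: a subset `I` of the monoid containing `0`, closed
under multiplication by arbitrary monoid elements, and such that whenever
`∑ a_i + c = ∑ b_j` holds in the quotient semiring with all `a_i, b_j ∈ I`,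
then `c ∈ I`. -/
def IsKIdeal (I : Set SL2Monoid) : Prop :=
  0 ∈ I ∧ (∀ a ∈ I, ∀ b : SL2Monoid, a * b ∈ I) ∧
    ∀ (m l : ℕ) (a : Fin m → SL2Monoid) (b : Fin l → SL2Monoid) (c : SL2Monoid),
      (∀ i, a i ∈ I) → (∀ j, b j ∈ I) →
      (∑ i, toSL2Semiring (a i)) + toSL2Semiring c = ∑ j, toSL2Semiring (b j) →
      c ∈ I

/-- A prime `k`-ideal: a `k`-ideal whose complement contains `1` and is closed under
multiplication. -/
def IsPrimeKIdeal (I : Set SL2Monoid) : Prop :=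
  IsKIdeal I ∧ 1 ∉ I ∧ ∀ a b : SL2Monoid, a ∉ I → b ∉ I → a * b ∉ I

/-- The monoid ideal generated by the generators `T i`, `i ∈ S`. -/
noncomputable def genIdeal (S : Set (Fin 4)) : Set SL2Monoid :=
  {a | a = 0 ∨ ∃ i ∈ S, ∃ b, a = Tgen i * b}

-- aux
noncomputable def mono (f : Fin 4 →₀ ℕ) : SL2Monoid :=
  (Multiplicative.ofAdd f : Multiplicative (Fin 4 →₀ ℕ))

lemma mono_ne_zero (f : Fin 4 →₀ ℕ) : mono f ≠ 0 := WithZero.coe_ne_zero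

lemma mono_mul (f g : Fin 4 →₀ ℕ) : mono f * mono g = mono (f + g) := by
  simp [mono, ← WithZero.coe_mul, ← ofAdd_add]

lemma mono_zero : mono 0 = 1 := rfl

lemma Tgen_eq (i : Fin 4) : Tgen i = mono (Finsupp.single i 1) := rfl

lemma exists_mono {a : SL2Monoid} (h : a ≠ 0) : ∃ f, a = mono f := by
  obtain ⟨x, rfl⟩ := WithZero.ne_zero_iff_exists.mp h
  exact ⟨x.toAdd, rfl⟩

noncomputable def polyOf (a : SL2Monoid) : MvPolynomial (Fin 4) ℕ :=
  if h : a = 0 then 0 else ∏ i : Fin 4, (X i : MvPolynomial (Fin 4) ℕ) ^ ((WithZero.unzero h).toAdd i)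

lemma toSL2_eq (a : SL2Monoid) : toSL2Semiring a = (polyOf a : SL2Semiring) := by
  unfold toSL2Semiring polyOf
  split
  · exact (map_zero sl2Con.mk').symm
  · rfl

lemma polyOf_mono (f : Fin 4 →₀ ℕ) :
    polyOf (mono f) = ∏ i : Fin 4, (X i : MvPolynomial (Fin 4) ℕ) ^ f i := by
  rw [polyOf, dif_neg (mono_ne_zero f)]
  simp [mono, WithZero.unzero_coe]

noncomputable def psi (v : Fin 4 → ℤ) (a : SL2Monoid) : ℤ := aeval v (polyOf a)

lemma psi_zero (v : Fin 4 → ℤ) : psi v 0 = 0 := by simp [psi, polyOf]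

lemma psi_mono (v : Fin 4 → ℤ) (f : Fin 4 →₀ ℕ) : psi v (mono f) = ∏ i : Fin 4, v i ^ f i := by
  simp [psi, polyOf_mono]

lemma psi_mul (v : Fin 4 → ℤ) (a b : SL2Monoid) : psi v (a * b) = psi v a * psi v b := by
  by_cases ha : a = 0
  · simp [ha, psi_zero]
  by_cases hb : b = 0
  · simp [hb, psi_zero]
  obtain ⟨f, rfl⟩ := exists_mono ha
  obtain ⟨g, rfl⟩ := exists_mono hb
  rw [mono_mul, psi_mono, psi_mono, psi_mono, ← Finset.prod_mul_distrib]
  simp [pow_add]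

lemma psi_one (v : Fin 4 → ℤ) : psi v 1 = 1 := by
  rw [← mono_zero, psi_mono]; simp

lemma psi_Tgen (v : Fin 4 → ℤ) (i : Fin 4) : psi v (Tgen i) = v i := by
  rw [Tgen_eq, psi_mono]
  rw [Finset.prod_eq_single i (fun j _ hj => by simp [Finsupp.single_apply, (Ne.symm hj)]) (by simp)]
  simp

-- the evaluation congruence
noncomputable def evalCon (v : Fin 4 → ℤ) : RingCon (MvPolynomial (Fin 4) ℕ) where
  r p q := aeval v p = aeval v q
  iseqv := ⟨fun _ => rfl, Eq.symm, Eq.trans⟩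
  mul' {a b c d} h h' := by simp only [map_mul]; rw [h, h']
  add' {a b c d} h h' := by simp only [map_add]; rw [h, h']

lemma sl2Con_le_evalCon (v : Fin 4 → ℤ) (hrel : v 0 * v 3 = v 1 * v 2 + 1) :
    sl2Con ≤ evalCon v := by
  apply RingCon.ringConGen_le.mpr
  rintro x y ⟨rfl, rfl⟩
  show aeval v _ = aeval v _
  simp [hrel]

lemma key (v : Fin 4 → ℤ) (hrel : v 0 * v 3 = v 1 * v 2 + 1)
    {m l : ℕ} (a : Fin m → SL2Monoid) (b : Fin l → SL2Monoid) (c : SL2Monoid)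
    (h : (∑ i, toSL2Semiring (a i)) + toSL2Semiring c = ∑ j, toSL2Semiring (b j)) :
    (∑ i, psi v (a i)) + psi v c = ∑ j, psi v (b j) := by
  simp only [toSL2_eq] at h
  have h2 : (↑((∑ i, polyOf (a i)) + polyOf c) : SL2Semiring) = ↑(∑ j, polyOf (b j)) := by
    have e1 : ((∑ i, polyOf (a i) : MvPolynomial (Fin 4) ℕ) : SL2Semiring)
        = ∑ i, (polyOf (a i) : SL2Semiring) := map_sum sl2Con.mk' _ _
    have e2 : ((∑ j, polyOf (b j) : MvPolynomial (Fin 4) ℕ) : SL2Semiring)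
        = ∑ j, (polyOf (b j) : SL2Semiring) := map_sum sl2Con.mk' _ _
    push_cast
    exact h
  have h3 := sl2Con_le_evalCon v hrel (sl2Con.eq.mp h2)
  have h4 : aeval v ((∑ i, polyOf (a i)) + polyOf c) = aeval v (∑ j, polyOf (b j)) := h3
  simpa [map_sum, psi] using h4

-- decomposition of a monomial along a variable occurring in it
lemma mono_factor {f : Fin 4 →₀ ℕ} {i : Fin 4} (hi : f i ≠ 0) :
    ∃ g : Fin 4 →₀ ℕ, f = Finsupp.single i 1 + g := by
  refine ⟨f - Finsupp.single i 1, ?_⟩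
  ext j
  simp only [Finsupp.add_apply, Finsupp.tsub_apply, Finsupp.single_apply]
  by_cases h : i = j
  · subst h; simp; omega
  · simp [h]

lemma mem_genIdeal_iff {S : Set (Fin 4)} (v : Fin 4 → ℤ) (hv : ∀ i, v i = 0 ↔ i ∈ S)
    (a : SL2Monoid) : a ∈ genIdeal S ↔ psi v a = 0 := by
  constructor
  · rintro (rfl | ⟨i, hiS, b, rfl⟩)
    · exact psi_zero v
    · rw [psi_mul, psi_Tgen, (hv i).mpr hiS, zero_mul]
  · intro h
    by_cases ha : a = 0
    · exact Or.inl ha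
    obtain ⟨f, rfl⟩ := exists_mono ha
    rw [psi_mono] at h
    obtain ⟨i, -, hi⟩ := Finset.prod_eq_zero_iff.mp h
    have hfi : f i ≠ 0 := by
      intro h0; rw [h0, pow_zero] at hi; exact one_ne_zero hi
    have hvi : v i = 0 := by
      rcases pow_eq_zero_iff hfi |>.mp hi with h'; exact h'
    obtain ⟨g, hg⟩ := mono_factor hfi
    exact Or.inr ⟨i, (hv i).mp hvi, mono g, by rw [hg, ← mono_mul, Tgen_eq]⟩

lemma isPrime_gen {S : Set (Fin 4)} (v : Fin 4 → ℤ) (hrel : v 0 * v 3 = v 1 * v 2 + 1)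
    (hv : ∀ i, v i = 0 ↔ i ∈ S) : IsPrimeKIdeal (genIdeal S) := by
  have memiff := mem_genIdeal_iff v hv
  refine ⟨⟨Or.inl rfl, ?_, ?_⟩, ?_, ?_⟩
  · rintro a (rfl | ⟨i, hiS, x, rfl⟩) b
    · exact Or.inl (zero_mul b)
    · exact Or.inr ⟨i, hiS, x * b, by rw [mul_assoc]⟩
  · intro m l a b c ha hb h
    have h2 := key v hrel a b c h
    rw [memiff]
    have za : ∀ i, psi v (a i) = 0 := fun i => (memiff _).mp (ha i)
    have zb : ∀ j, psi v (b j) = 0 := fun j => (memiff _).mp (hb j)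
    simp only [za, zb, Finset.sum_const_zero, zero_add] at h2
    exact h2
  · rw [memiff, psi_one]; exact one_ne_zero
  · intro a b ha hb hab
    rw [memiff] at ha hb hab
    rw [psi_mul] at hab
    exact (mul_ne_zero ha hb) hab

-- the defining relation holds in the quotient
lemma rel_holds :
    toSL2Semiring (Tgen 1 * Tgen 2) + toSL2Semiring 1 = toSL2Semiring (Tgen 0 * Tgen 3) := by
  have p1 : polyOf (Tgen 1 * Tgen 2) = X 1 * X 2 := by
    rw [Tgen_eq, Tgen_eq, mono_mul, polyOf_mono, Fin.prod_univ_four]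
    simp [Finsupp.single_apply]
  have p3 : polyOf (Tgen 0 * Tgen 3) = X 0 * X 3 := by
    rw [Tgen_eq, Tgen_eq, mono_mul, polyOf_mono, Fin.prod_univ_four]
    simp [Finsupp.single_apply]
  have p2 : polyOf (1 : SL2Monoid) = 1 := by
    rw [← mono_zero, polyOf_mono]; simp
  rw [toSL2_eq, toSL2_eq, toSL2_eq, p1, p2, p3]
  have : ((X 1 * X 2 + 1 : MvPolynomial (Fin 4) ℕ) : SL2Semiring) = ((X 0 * X 3 : MvPolynomial (Fin 4) ℕ) : SL2Semiring) := by
    exact (sl2Con.eq.mpr (RingConGen.Rel.symm (RingConGen.Rel.of _ _ ⟨rfl, rfl⟩)))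
  rw [← this]
  push_cast
  ring

-- part 1
lemma part1 {I : Set SL2Monoid} (hI : IsPrimeKIdeal I) :
    ¬ ((Tgen 0 ∈ I ∨ Tgen 3 ∈ I) ∧ (Tgen 1 ∈ I ∨ Tgen 2 ∈ I)) := by
  rintro ⟨h03, h12⟩
  obtain ⟨⟨-, hmul, hk⟩, h1, -⟩ := hI
  have hA : Tgen 0 * Tgen 3 ∈ I := by
    rcases h03 with h | h
    · exact hmul _ h _
    · rw [mul_comm]; exact hmul _ h _
  have hB : Tgen 1 * Tgen 2 ∈ I := by
    rcases h12 with h | h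
    · exact hmul _ h _
    · rw [mul_comm]; exact hmul _ h _
  refine h1 (hk 1 1 (fun _ => Tgen 1 * Tgen 2) (fun _ => Tgen 0 * Tgen 3) 1
    (fun _ => hB) (fun _ => hA) ?_)
  simpa using rel_holds

-- a monomial with all its variables outside I is outside I
lemma not_mem_of_vars {I : Set SL2Monoid} (hI : IsPrimeKIdeal I) :
    ∀ d (f : Fin 4 →₀ ℕ), (∑ i : Fin 4, f i) = d → (∀ i, f i ≠ 0 → Tgen i ∉ I) →
      mono f ∉ I := by
  intro d
  induction d using Nat.strong_induction_on with
  | _ d ih =>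
    intro f hd hvars
    by_cases hf : f = 0
    · rw [hf, mono_zero]; exact hI.2.1
    · obtain ⟨i, hi⟩ : ∃ i, f i ≠ 0 := by
        by_contra h
        push_neg at h
        exact hf (Finsupp.ext fun i => h i)
      obtain ⟨g, hg⟩ := mono_factor hi
      have hgd : (∑ j : Fin 4, g j) < d := by
        subst hd
        have : ∀ j, f j = Finsupp.single i 1 j + g j := fun j => by rw [hg]; rfl
        have hsum : (∑ j : Fin 4, f j) = (∑ j : Fin 4, Finsupp.single i 1 j) + ∑ j : Fin 4, g j := by
          rw [← Finset.sum_add_distrib]; exact Finset.sum_congr rfl fun j _ => this j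
        have hone : (∑ j : Fin 4, Finsupp.single i 1 j) = 1 := by
          rw [Finset.sum_eq_single i (fun j _ hj => by simp [Finsupp.single_apply, Ne.symm hj]) (by simp)]
          simp
        omega
      have hgI : mono g ∉ I := by
        refine ih _ hgd g rfl fun j hj => hvars j ?_
        intro h0
        have : f j = Finsupp.single i 1 j + g j := by rw [hg]; rfl
        rw [h0] at this
        omega
      have : mono f = Tgen i * mono g := by rw [hg, ← mono_mul, Tgen_eq]
      rw [this]
      exact hI.2.2 _ _ (hvars i hi) hgI

lemma eq_genIdeal {I : Set SL2Monoid} (hI : IsPrimeKIdeal I) :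
    I = genIdeal {i | Tgen i ∈ I} := by
  ext a
  constructor
  · intro ha
    by_cases h0 : a = 0
    · exact Or.inl h0
    obtain ⟨f, rfl⟩ := exists_mono h0
    by_cases hex : ∃ i, f i ≠ 0 ∧ Tgen i ∈ I
    · obtain ⟨i, hi, hTi⟩ := hex
      obtain ⟨g, hg⟩ := mono_factor hi
      exact Or.inr ⟨i, hTi, mono g, by rw [hg, ← mono_mul, Tgen_eq]⟩
    · push_neg at hex
      exact absurd ha (not_mem_of_vars hI _ f rfl fun i hi => hex i hi)
  · rintro (rfl | ⟨i, hiI, b, rfl⟩)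
    · exact hI.1.1
    · exact hI.1.2.1 _ hiI b

lemma genIdeal_congr {I : Set SL2Monoid} (hI : IsPrimeKIdeal I) (S : Set (Fin 4))
    (h : ∀ i, Tgen i ∈ I ↔ i ∈ S) : I = genIdeal S := by
  rw [eq_genIdeal hI]
  exact congrArg genIdeal (Set.ext h)


/-- A prime `k`-ideal of the blueprint
`B = F_1[T_1,...,T_4] // ⟨T_1T_4 ≡ T_2T_3 + 1⟩` cannot contain both one of
`{T_1, T_4}` and one of `{T_2, T_3}`; consequently the prime `k`-ideals of `B` are
exactly `{0}`, `(T_1)`, `(T_2)`, `(T_3)`, `(T_4)`, `(T_1,T_4)` and `(T_2,T_3)`. -/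
theorem primeKIdeals_of_SL2_blueprint :
    (∀ I : Set SL2Monoid, IsPrimeKIdeal I →
      ¬ ((Tgen 0 ∈ I ∨ Tgen 3 ∈ I) ∧ (Tgen 1 ∈ I ∨ Tgen 2 ∈ I))) ∧
    (∀ I : Set SL2Monoid, IsPrimeKIdeal I ↔
      I ∈ ({genIdeal ∅, genIdeal {0}, genIdeal {1}, genIdeal {2}, genIdeal {3},
        genIdeal {0, 3}, genIdeal {1, 2}} : Set (Set SL2Monoid))) := by
  refine ⟨fun I hI => part1 hI, fun I => ⟨?_, ?_⟩⟩
  · intro hI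
    simp only [Set.mem_insert_iff, Set.mem_singleton_iff]
    by_cases h0 : Tgen 0 ∈ I <;> by_cases h1 : Tgen 1 ∈ I <;>
      by_cases h2 : Tgen 2 ∈ I <;> by_cases h3 : Tgen 3 ∈ I
    · exact absurd ⟨Or.inl h0, Or.inl h1⟩ (part1 hI)
    · exact absurd ⟨Or.inl h0, Or.inl h1⟩ (part1 hI)
    · exact absurd ⟨Or.inl h0, Or.inl h1⟩ (part1 hI)
    · exact absurd ⟨Or.inl h0, Or.inl h1⟩ (part1 hI)
    · exact absurd ⟨Or.inl h0, Or.inr h2⟩ (part1 hI)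
    · exact absurd ⟨Or.inl h0, Or.inr h2⟩ (part1 hI)
    · exact Or.inr (Or.inr (Or.inr (Or.inr (Or.inr (Or.inl (genIdeal_congr hI {0, 3} (fun i => by fin_cases i <;> simp [h0, h1, h2, h3])))))))
    · exact Or.inr (Or.inl (genIdeal_congr hI {0} (fun i => by fin_cases i <;> simp [h0, h1, h2, h3])))
    · exact absurd ⟨Or.inr h3, Or.inl h1⟩ (part1 hI)
    · exact Or.inr (Or.inr (Or.inr (Or.inr (Or.inr (Or.inr (genIdeal_congr hI {1, 2} (fun i => by fin_cases i <;> simp [h0, h1, h2, h3])))))))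
    · exact absurd ⟨Or.inr h3, Or.inl h1⟩ (part1 hI)
    · exact Or.inr (Or.inr (Or.inl (genIdeal_congr hI {1} (fun i => by fin_cases i <;> simp [h0, h1, h2, h3]))))
    · exact absurd ⟨Or.inr h3, Or.inr h2⟩ (part1 hI)
    · exact Or.inr (Or.inr (Or.inr (Or.inl (genIdeal_congr hI {2} (fun i => by fin_cases i <;> simp [h0, h1, h2, h3])))))
    · exact Or.inr (Or.inr (Or.inr (Or.inr (Or.inl (genIdeal_congr hI {3} (fun i => by fin_cases i <;> simp [h0, h1, h2, h3]))))))
    · exact Or.inl (genIdeal_congr hI ∅ (fun i => by fin_cases i <;> simp [h0, h1, h2, h3]))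
  · intro hmem
    simp only [Set.mem_insert_iff, Set.mem_singleton_iff] at hmem
    rcases hmem with rfl | rfl | rfl | rfl | rfl | rfl | rfl
    · exact isPrime_gen ![1, 1, 2, 3] (by decide) (fun i => by fin_cases i <;> simp)
    · exact isPrime_gen ![0, 1, -1, 1] (by decide) (fun i => by fin_cases i <;> simp)
    · exact isPrime_gen ![1, 0, 1, 1] (by decide) (fun i => by fin_cases i <;> simp)
    · exact isPrime_gen ![1, 1, 0, 1] (by decide) (fun i => by fin_cases i <;> simp)
    · exact isPrime_gen ![1, 1, -1, 0] (by decide) (fun i => by fin_cases i <;> simp)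
    · exact isPrime_gen ![0, 1, -1, 0] (by decide) (fun i => by fin_cases i <;> simp)
    · exact isPrime_gen ![1, 0, 0, 1] (by decide) (fun i => by fin_cases i <;> simp)
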